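/- Suppose t_ε is a nonnegative random variable (the first ε-exit time of a sticky pair) with P(t_ε > εt) = E(exp(-√2·τ·l_ε(εt))), where l_ε(εt) → t/2 in probability as ε ↓ 0 with the exponential concentration bound P(|l_ε(εt) - t/2| > γt) ≤ C e^{-ctγ/ε}. Then the family {P(t_ε ≥ ε·)}_{ε≤1} is uniformly integrable and lim_{ε↓0} E(t_ε)/ε = ∫₀^∞ e^{-√2 τ u/2} du = √2/τ. -/

import Mathlib

open MeasureTheory ProbabilityTheory Filter Set

noncomputable section

/-!
By the layer-cake formula and the scaling `t ↦ ε t`,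
`E(t_ε)/ε = ∫₀^∞ P(t_ε > ε t) dt = ∫₀^∞ E exp(-√2 τ l_ε(ε t)) dt`.
Splitting the expectation on the event `{l_ε(ε t) < t/4}`, which lies in the concentration event
with `γ = 1/4`, bounds the integrand by `e^{-√2 τ t/4} + C e^{-c t/4}` uniformly in `ε ≤ 1`.
This integrable majorant gives the uniform integrability and, as `l_ε(ε t) → t/2` in probability
forces `E exp(-√2 τ l_ε(ε t)) → e^{-√2 τ t/2}`, dominated convergence gives the limit.
-/

open Real Topology

lemma abs_exp_neg_sub_exp_neg_le {x y : ℝ} (hx : 0 ≤ x) (hy : 0 ≤ y) :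
    |exp (-x) - exp (-y)| ≤ |x - y| := by
  wlog hyx : y ≤ x generalizing x y
  · rw [abs_sub_comm, abs_sub_comm x]
    exact this hy hx (le_of_not_ge hyx)
  have hfactor : exp (-y) - exp (-x) = exp (-y) * (1 - exp (-(x - y))) := by
    rw [mul_sub, mul_one, ← exp_add]
    ring_nf
  have hexp_y : exp (-y) ≤ 1 := exp_le_one_iff.2 (by linarith)
  have hgap : 1 - exp (-(x - y)) ≤ x - y := by linarith [one_sub_le_exp_neg (x - y)]
  have hgap_nonneg : 0 ≤ 1 - exp (-(x - y)) := sub_nonneg.2 (exp_le_one_iff.2 (by linarith))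
  rw [abs_sub_comm, hfactor, abs_of_nonneg (by positivity), abs_of_nonneg (by linarith)]
  calc exp (-y) * (1 - exp (-(x - y))) ≤ 1 * (x - y) :=
        mul_le_mul hexp_y hgap hgap_nonneg zero_le_one
    _ = x - y := one_mul _

lemma integrableOn_Ioi_exp_neg_mul_add {b₁ b₂ : ℝ} (h₁ : 0 < b₁) (h₂ : 0 < b₂) (C : ℝ) :
    IntegrableOn (fun t => exp (-b₁ * t) + C * exp (-b₂ * t)) (Ioi 0) :=
  (exp_neg_integrableOn_Ioi 0 h₁).add ((exp_neg_integrableOn_Ioi 0 h₂).const_mul C)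

lemma integral_exp_neg_mul_Ioi_zero {b : ℝ} (hb : 0 < b) :
    ∫ t in Ioi 0, exp (-b * t) = b⁻¹ := by
  rw [integral_exp_mul_Ioi (neg_neg_of_pos hb), mul_zero, exp_zero, neg_div, div_neg, neg_neg,
    one_div]

lemma unifIntegrable_of_norm_le {α β ι : Type*} [MeasurableSpace α] {μ : Measure α}
    [NormedAddCommGroup β] {p : ENNReal} (hp : 1 ≤ p) (hp' : p ≠ ⊤) {f : ι → α → β}
    {g : α → ℝ} (hg : MemLp g p μ) (hfg : ∀ i, ∀ᵐ x ∂μ, ‖f i x‖ ≤ g x) :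
    UnifIntegrable f p μ := by
  intro η hη
  obtain ⟨δ, hδ, hgδ⟩ := unifIntegrable_const (ι := ι) hp hp' hg hη
  refine ⟨δ, hδ, fun i s hs hμs => (eLpNorm_mono_ae_real ?_).trans (hgδ i s hs hμs)⟩
  filter_upwards [hfg i] with x hx
  by_cases hxs : x ∈ s
  · simpa [indicator_of_mem hxs] using hx
  · simp [indicator_of_notMem hxs]

section Expectation

variable {Ω : Type*} [MeasurableSpace Ω] {μ : Measure Ω}

lemma integral_le_add_measureReal_of_le_indicator [IsProbabilityMeasure μ] {f : Ω → ℝ}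
    (hf : Integrable f μ) {S : Set Ω} (hS : MeasurableSet S) {b : ℝ}
    (hfb : ∀ ω, f ω ≤ b + S.indicator 1 ω) :
    ∫ ω, f ω ∂μ ≤ b + μ.real S := by
  have hind : Integrable (S.indicator 1) μ := (integrable_const (1 : ℝ)).indicator hS
  calc ∫ ω, f ω ∂μ ≤ ∫ ω, (b + S.indicator 1 ω) ∂μ :=
        integral_mono hf ((integrable_const b).add hind) hfb
    _ = b + μ.real S := by
        rw [integral_add (integrable_const b) hind, integral_const, integral_indicator_one hS]
        simp

lemma integrable_exp_neg_mul [IsFiniteMeasure μ] {X : Ω → ℝ} (hX : Measurable X)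
    (hX0 : ∀ ω, 0 ≤ X ω) {a : ℝ} (ha : 0 ≤ a) :
    Integrable (fun ω => exp (-(a * X ω))) μ := by
  refine (integrable_const (1 : ℝ)).mono' (hX.const_mul a).neg.exp.aestronglyMeasurable
    (ae_of_all _ fun ω => ?_)
  rw [norm_of_nonneg (exp_pos _).le]
  exact exp_le_one_iff.2 (by nlinarith [hX0 ω])

section Laplace

variable [IsProbabilityMeasure μ] {X : Ω → ℝ} {a : ℝ}

lemma integral_exp_neg_mul_le (hX : Measurable X) (hX0 : ∀ ω, 0 ≤ X ω) (ha : 0 ≤ a) (r : ℝ) :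
    ∫ ω, exp (-(a * X ω)) ∂μ ≤ exp (-(a * r)) + μ.real {ω | X ω < r} := by
  refine integral_le_add_measureReal_of_le_indicator (integrable_exp_neg_mul hX hX0 ha)
    (measurableSet_lt hX measurable_const) fun ω => ?_
  by_cases hω : X ω < r
  · rw [indicator_of_mem (s := {ω | X ω < r}) hω, Pi.one_apply]
    have := exp_le_one_iff.2 (by nlinarith [hX0 ω] : -(a * X ω) ≤ 0)
    linarith [exp_pos (-(a * r))]
  · rw [indicator_of_notMem (s := {ω | X ω < r}) hω, add_zero]
    exact exp_le_exp.2 (by nlinarith [not_lt.1 hω])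

lemma abs_integral_exp_neg_mul_sub_le (hX : Measurable X) (hX0 : ∀ ω, 0 ≤ X ω) (ha : 0 ≤ a)
    {m δ : ℝ} (hm : 0 ≤ m) (hδ : 0 ≤ δ) :
    |∫ ω, exp (-(a * X ω)) ∂μ - exp (-(a * m))| ≤ a * δ + μ.real {ω | δ < |X ω - m|} := by
  have hint := (integrable_exp_neg_mul (μ := μ) hX hX0 ha).sub (integrable_const (exp (-(a * m))))
  have hmean : ∫ ω, exp (-(a * X ω)) ∂μ - exp (-(a * m))
      = ∫ ω, (exp (-(a * X ω)) - exp (-(a * m))) ∂μ := by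
    rw [integral_sub (integrable_exp_neg_mul hX hX0 ha) (integrable_const _), integral_const]
    simp
  rw [hmean]
  refine abs_integral_le_integral_abs.trans (integral_le_add_measureReal_of_le_indicator hint.abs
    (measurableSet_lt measurable_const (hX.sub_const m).abs) fun ω => ?_)
  have hlip := abs_exp_neg_sub_exp_neg_le (mul_nonneg ha (hX0 ω)) (mul_nonneg ha hm)
  rw [← mul_sub, abs_mul, abs_of_nonneg ha] at hlip
  change |exp (-(a * X ω)) - exp (-(a * m))| ≤ _
  by_cases hω : δ < |X ω - m|
  · rw [indicator_of_mem (s := {ω | δ < |X ω - m|}) hω, Pi.one_apply]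
    have hX_le := exp_le_one_iff.2 (by nlinarith [hX0 ω] : -(a * X ω) ≤ 0)
    have hm_le := exp_le_one_iff.2 (by nlinarith : -(a * m) ≤ 0)
    have := exp_pos (-(a * X ω))
    have := exp_pos (-(a * m))
    rw [abs_le]
    constructor <;> nlinarith
  · rw [indicator_of_notMem (s := {ω | δ < |X ω - m|}) hω, add_zero]
    exact hlip.trans (mul_le_mul_of_nonneg_left (not_lt.1 hω) ha)

lemma tendsto_integral_exp_neg_mul {ι : Type*} {l : Filter ι} {X : ι → Ω → ℝ}
    (hX : ∀ i, Measurable (X i)) (hX0 : ∀ i ω, 0 ≤ X i ω) (ha : 0 ≤ a) {m : ℝ} (hm : 0 ≤ m)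
    (hXm : ∀ δ > 0, Tendsto (fun i => μ.real {ω | δ < |X i ω - m|}) l (𝓝 0)) :
    Tendsto (fun i => ∫ ω, exp (-(a * X i ω)) ∂μ) l (𝓝 (exp (-(a * m)))) := by
  rw [Metric.tendsto_nhds]
  intro η hη
  have hδ : 0 < η / (2 * (a + 1)) := by positivity
  have haδ : a * (η / (2 * (a + 1))) < η / 2 := by
    rw [mul_div_assoc', div_lt_div_iff₀ (by positivity) two_pos]
    nlinarith
  filter_upwards [(hXm _ hδ).eventually_lt_const (half_pos hη)] with i hi
  rw [Real.dist_eq]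
  linarith [abs_integral_exp_neg_mul_sub_le (μ := μ) (hX i) (hX0 i) ha hm hδ.le]

end Laplace

section LayerCake

variable [IsFiniteMeasure μ] {T : Ω → ℝ}

lemma antitone_measureReal_mul_lt {ε : ℝ} (hε : 0 ≤ ε) :
    Antitone fun t => μ.real {ω | ε * t < T ω} :=
  fun _ _ hst => measureReal_mono fun _ hω => (mul_le_mul_of_nonneg_left hst hε).trans_lt hω

/-- No integrability is needed: if `T` is not integrable, both sides are `0`. -/
lemma integral_eq_integral_Ioi_measureReal_lt (hT : Measurable T) (hT0 : ∀ ω, 0 ≤ T ω) :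
    ∫ ω, T ω ∂μ = ∫ t in Ioi 0, μ.real {ω | t < T ω} := by
  have hanti : Antitone fun t => μ.real {ω | t < T ω} := by
    simpa only [one_mul] using antitone_measureReal_mul_lt (μ := μ) (T := T) zero_le_one
  rw [integral_eq_lintegral_of_nonneg_ae (ae_of_all _ hT0) hT.aestronglyMeasurable,
    integral_eq_lintegral_of_nonneg_ae (ae_of_all _ fun _ => measureReal_nonneg)
      hanti.measurable.aestronglyMeasurable,
    lintegral_eq_lintegral_meas_lt μ (ae_of_all _ hT0) hT.aemeasurable]
  simp only [measureReal_def, ENNReal.ofReal_toReal (measure_ne_top μ _)]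

lemma integral_div_eq_integral_Ioi_measureReal_mul_lt (hT : Measurable T) (hT0 : ∀ ω, 0 ≤ T ω)
    {ε : ℝ} (hε : 0 < ε) :
    (∫ ω, T ω ∂μ) / ε = ∫ t in Ioi 0, μ.real {ω | ε * t < T ω} := by
  rw [integral_eq_integral_Ioi_measureReal_lt hT hT0,
    integral_comp_mul_left_Ioi (fun t => μ.real {ω | t < T ω}) 0 hε, mul_zero, smul_eq_mul,
    div_eq_inv_mul]

end LayerCake

end Expectation

section ExitTime

variable {Ω : Type*} [MeasurableSpace Ω] {P : Measure Ω} [IsProbabilityMeasure P]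
  {T : ℝ → Ω → ℝ} {L : ℝ → ℝ → Ω → ℝ} {a b₁ b₂ c C : ℝ}

lemma unifIntegrable_measureReal_mul_le_of_tail (hb₁ : 0 < b₁) (hb₂ : 0 < b₂)
    (htail : ∀ ε t : ℝ, 0 < ε → ε ≤ 1 → 0 < t →
      P.real {ω | ε * t < T ε ω} ≤ exp (-b₁ * t) + C * exp (-b₂ * t)) :
    UnifIntegrable (fun (e : {e : ℝ // 0 < e ∧ e ≤ 1}) (t : ℝ) => P.real {ω | e.1 * t ≤ T e.1 ω})
      1 (volume.restrict (Ioi 0)) := by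
  refine unifIntegrable_of_norm_le le_rfl ENNReal.one_ne_top (memLp_one_iff_integrable.2
    (integrableOn_Ioi_exp_neg_mul_add (half_pos hb₁) (half_pos hb₂) C)) fun e => ?_
  rw [ae_restrict_iff' measurableSet_Ioi]
  refine ae_of_all _ fun t (ht : 0 < t) => ?_
  rw [norm_of_nonneg measureReal_nonneg]
  calc P.real {ω | e.1 * t ≤ T e.1 ω} ≤ P.real {ω | e.1 * (t / 2) < T e.1 ω} :=
        measureReal_mono fun ω (hω : e.1 * t ≤ T e.1 ω) =>
          (mul_lt_mul_of_pos_left (half_lt_self ht) e.2.1).trans_le hω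
    _ ≤ exp (-b₁ * (t / 2)) + C * exp (-b₂ * (t / 2)) := htail e.1 _ e.2.1 e.2.2 (half_pos ht)
    _ = exp (-(b₁ / 2) * t) + C * exp (-(b₂ / 2) * t) := by ring_nf

lemma tendsto_integral_div_of_tail (hT : ∀ ε, Measurable (T ε)) (hT0 : ∀ ε ω, 0 ≤ T ε ω)
    (hb₁ : 0 < b₁) (hb₂ : 0 < b₂)
    (htail : ∀ ε t : ℝ, 0 < ε → ε ≤ 1 → 0 < t →
      P.real {ω | ε * t < T ε ω} ≤ exp (-b₁ * t) + C * exp (-b₂ * t))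
    {f : ℝ → ℝ} (hlim : ∀ t > 0, Tendsto (fun ε => P.real {ω | ε * t < T ε ω}) (𝓝[>] 0) (𝓝 (f t))) :
    Tendsto (fun ε => (∫ ω, T ε ω ∂P) / ε) (𝓝[>] 0) (𝓝 (∫ t in Ioi 0, f t)) := by
  refine (tendsto_integral_filter_of_dominated_convergence
    (F := fun ε t => P.real {ω | ε * t < T ε ω}) _ ?_ ?_
    (integrableOn_Ioi_exp_neg_mul_add hb₁ hb₂ C) ?_).congr' ?_
  · filter_upwards [self_mem_nhdsWithin] with ε (hε : 0 < ε)
    exact (antitone_measureReal_mul_lt hε.le).measurable.aestronglyMeasurable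
  · filter_upwards [Ioc_mem_nhdsGT zero_lt_one] with ε hε
    rw [ae_restrict_iff' measurableSet_Ioi]
    exact ae_of_all _ fun t ht => (norm_of_nonneg measureReal_nonneg).trans_le
      (htail ε t hε.1 hε.2 ht)
  · rw [ae_restrict_iff' measurableSet_Ioi]
    exact ae_of_all _ hlim
  · filter_upwards [self_mem_nhdsWithin] with ε hε
    exact (integral_div_eq_integral_Ioi_measureReal_mul_lt (hT ε) (hT0 ε) hε).symm

lemma measureReal_mul_lt_le_of_concentration (ha : 0 ≤ a) (hc : 0 ≤ c) (hC : 0 ≤ C)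
    (hL : ∀ ε s, Measurable (L ε s)) (hL0 : ∀ ε s ω, 0 ≤ L ε s ω)
    (hid : ∀ ε t : ℝ, 0 < ε → 0 ≤ t →
      P.real {ω | ε * t < T ε ω} = ∫ ω, exp (-(a * L ε (ε * t) ω)) ∂P)
    (hconc : ∀ ε t γ : ℝ, 0 < ε → 0 < t → 0 < γ →
      P.real {ω | γ * t < |L ε (ε * t) ω - t / 2|} ≤ C * exp (-(c * t * γ / ε)))
    {ε t : ℝ} (hε : 0 < ε) (hε1 : ε ≤ 1) (ht : 0 < t) :
    P.real {ω | ε * t < T ε ω} ≤ exp (-(a / 4) * t) + C * exp (-(c / 4) * t) := by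
  have hsub : {ω | L ε (ε * t) ω < t / 4} ⊆ {ω | 1 / 4 * t < |L ε (ε * t) ω - t / 2|} :=
    fun ω (hω : L ε (ε * t) ω < t / 4) => show 1 / 4 * t < |L ε (ε * t) ω - t / 2| by
      rw [abs_sub_comm, lt_abs]
      left
      linarith
  have hrate : c * t / 4 ≤ c * t * (1 / 4) / ε :=
    (le_div_self (by positivity) hε hε1).trans_eq' (by ring)
  rw [hid ε t hε ht.le]
  calc ∫ ω, exp (-(a * L ε (ε * t) ω)) ∂P
      ≤ exp (-(a * (t / 4))) + P.real {ω | L ε (ε * t) ω < t / 4} :=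
        integral_exp_neg_mul_le (hL _ _) (hL0 _ _) ha _
    _ ≤ exp (-(a * (t / 4))) + C * exp (-(c * t * (1 / 4) / ε)) := by
        gcongr
        exact (measureReal_mono hsub).trans (hconc ε t _ hε ht (by norm_num))
    _ ≤ exp (-(a / 4) * t) + C * exp (-(c / 4) * t) := by
        rw [show a * (t / 4) = a / 4 * t by ring, neg_mul, neg_mul]
        gcongr
        linarith

lemma tendsto_measureReal_mul_lt (ha : 0 ≤ a) (hc : 0 < c)
    (hL : ∀ ε s, Measurable (L ε s)) (hL0 : ∀ ε s ω, 0 ≤ L ε s ω)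
    (hid : ∀ ε t : ℝ, 0 < ε → 0 ≤ t →
      P.real {ω | ε * t < T ε ω} = ∫ ω, exp (-(a * L ε (ε * t) ω)) ∂P)
    (hconc : ∀ ε t γ : ℝ, 0 < ε → 0 < t → 0 < γ →
      P.real {ω | γ * t < |L ε (ε * t) ω - t / 2|} ≤ C * exp (-(c * t * γ / ε)))
    {t : ℝ} (ht : 0 < t) :
    Tendsto (fun ε => P.real {ω | ε * t < T ε ω}) (𝓝[>] 0) (𝓝 (exp (-(a * t / 2)))) := by
  have hconv : ∀ δ > 0, Tendsto (fun ε => P.real {ω | δ < |L ε (ε * t) ω - t / 2|})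
      (𝓝[>] 0) (𝓝 0) := by
    intro δ hδ
    have hk : 0 < c * t * (δ / t) := by positivity
    have hbound : Tendsto (fun ε => C * exp (-(c * t * (δ / t) / ε))) (𝓝[>] 0) (𝓝 0) := by
      simpa [div_eq_mul_inv] using ((tendsto_exp_atBot.comp (tendsto_neg_atTop_atBot.comp
        (tendsto_inv_nhdsGT_zero.const_mul_atTop hk))).const_mul C)
    refine tendsto_of_tendsto_of_tendsto_of_le_of_le' tendsto_const_nhds hbound
      (Eventually.of_forall fun _ => measureReal_nonneg) ?_
    filter_upwards [self_mem_nhdsWithin] with ε hε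
    simpa only [div_mul_cancel₀ δ ht.ne'] using hconc ε t (δ / t) hε ht (by positivity)
  rw [mul_div_assoc]
  refine (tendsto_integral_exp_neg_mul (fun ε => hL ε (ε * t)) (fun ε => hL0 ε (ε * t)) ha
    (by positivity) hconv).congr' ?_
  filter_upwards [self_mem_nhdsWithin] with ε hε
  exact (hid ε t hε ht.le).symm

end ExitTime

/-- If `t_ε ≥ 0` satisfies `P(t_ε > εt) = E(exp(-√2·τ·l_ε(εt)))`, where
`l_ε(εt) → t/2` in probability with the exponential concentration bound
`P(|l_ε(εt) - t/2| > γt) ≤ C e^{-ctγ/ε}`, then the family `{P(t_ε ≥ ε·)}_{ε ≤ 1}` is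
uniformly integrable and `lim_{ε↓0} E(t_ε)/ε = ∫₀^∞ e^{-√2 τ u/2} du = √2/τ`. -/
theorem stmt_17 {Ω : Type*} [MeasurableSpace Ω] (P : Measure Ω) [IsProbabilityMeasure P]
    (τ : ℝ) (hτ : 0 < τ)
    (tε : ℝ → Ω → ℝ) (htε_meas : ∀ ε, Measurable (tε ε))
    (htε_nonneg : ∀ ε ω, 0 ≤ tε ε ω)
    (l : ℝ → ℝ → Ω → ℝ) (hl_meas : ∀ ε s, Measurable (l ε s))
    (hl_nonneg : ∀ ε s ω, 0 ≤ l ε s ω)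
    (hid : ∀ ε t : ℝ, 0 < ε → 0 ≤ t →
      (P {ω | ε * t < tε ε ω}).toReal
        = ∫ ω, Real.exp (-(Real.sqrt 2 * τ * l ε (ε * t) ω)) ∂P)
    (hconc : ∃ c C : ℝ, 0 < c ∧ 0 < C ∧ ∀ ε t γ : ℝ, 0 < ε → 0 < t → 0 < γ →
      P {ω | γ * t < |l ε (ε * t) ω - t / 2|}
        ≤ ENNReal.ofReal (C * Real.exp (-(c * t * γ / ε)))) :
    UnifIntegrable
        (fun (e : {e : ℝ // 0 < e ∧ e ≤ 1}) (t : ℝ) =>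
          (P {ω | e.1 * t ≤ tε e.1 ω}).toReal) 1 (volume.restrict (Set.Ioi 0)) ∧
    (∫ u in Set.Ioi (0 : ℝ), Real.exp (-(Real.sqrt 2 * τ * u / 2))) = Real.sqrt 2 / τ ∧
    Tendsto (fun ε : ℝ => (∫ ω, tε ε ω ∂P) / ε)
      (nhdsWithin 0 (Set.Ioi 0)) (nhds (Real.sqrt 2 / τ)) := by
  obtain ⟨c, C, hc, hC, hconc⟩ := hconc
  have ha : 0 < √2 * τ := by positivity
  have hconc' : ∀ ε t γ : ℝ, 0 < ε → 0 < t → 0 < γ →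
      P.real {ω | γ * t < |l ε (ε * t) ω - t / 2|} ≤ C * exp (-(c * t * γ / ε)) :=
    fun ε t γ hε ht hγ => ENNReal.toReal_le_of_le_ofReal (by positivity) (hconc ε t γ hε ht hγ)
  have htail : ∀ ε t : ℝ, 0 < ε → ε ≤ 1 → 0 < t →
      P.real {ω | ε * t < tε ε ω} ≤ exp (-(√2 * τ / 4) * t) + C * exp (-(c / 4) * t) :=
    fun _ _ => measureReal_mul_lt_le_of_concentration ha.le hc.le hC.le hl_meas hl_nonneg hid hconc'
  have hvalue : ∫ u in Ioi 0, exp (-(√2 * τ * u / 2)) = √2 / τ := by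
    simp_rw [show ∀ u, -(√2 * τ * u / 2) = -(√2 * τ / 2) * u from fun u => by ring]
    rw [integral_exp_neg_mul_Ioi_zero (half_pos ha)]
    field_simp
    rw [sq_sqrt zero_le_two]
  refine ⟨unifIntegrable_measureReal_mul_le_of_tail (by positivity) (by positivity) htail, hvalue,
    ?_⟩
  rw [← hvalue]
  exact tendsto_integral_div_of_tail htε_meas htε_nonneg (by positivity) (by positivity) htail
    fun t ht => tendsto_measureReal_mul_lt ha.le hc hl_meas hl_nonneg hid hconc' ht
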